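/- arXiv:2112.13563 — 10 statements merged into one kernel-verified Lean document; each statement's English description precedes it below -/
import Mathlib

section
/- Let H be a real Hilbert space, E ⊆ H, p ∈ E, q ∈ H, and g : E → H a map with g(p) = q satisfying ⟨g(x) − q, g(y) − q⟩ = ⟨x − p, y − p⟩ for all x, y ∈ E. Suppose (xₙ), (yₙ) are sequences in E and (αₙ), (βₙ) sequences of reals such that both series Σₙ αₙ (xₙ − p) and Σₙ βₙ (yₙ − p) converge in H and have equal sums. Then Σₙ αₙ (g(xₙ) − q) = Σₙ βₙ (g(yₙ) − q). -/
open scoped InnerProductSpace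
open Filter

/-- well-definedness: two representations of the same element give image
series with the same sum. -/
theorem stmt2 {H : Type*} [NormedAddCommGroup H] [InnerProductSpace ℝ H] [CompleteSpace H]
    (E : Set H) (p q : H) (hp : p ∈ E) (g : H → H) (hgp : g p = q)
    (hg : ∀ x ∈ E, ∀ y ∈ E, ⟪g x - q, g y - q⟫_ℝ = ⟪x - p, y - p⟫_ℝ)
    (x y : ℕ → H) (hx : ∀ n, x n ∈ E) (hy : ∀ n, y n ∈ E) (α β : ℕ → ℝ) (s : H)
    (hxs : Tendsto (fun n => ∑ k ∈ Finset.range n, α k • (x k - p)) atTop (nhds s))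
    (hys : Tendsto (fun n => ∑ k ∈ Finset.range n, β k • (y k - p)) atTop (nhds s)) :
    ∃ t : H,
      Tendsto (fun n => ∑ k ∈ Finset.range n, α k • (g (x k) - q)) atTop (nhds t) ∧
      Tendsto (fun n => ∑ k ∈ Finset.range n, β k • (g (y k) - q)) atTop (nhds t) := by
  have inner_eq : ∀ (u v : ℕ → H), (∀ n, u n ∈ E) → (∀ n, v n ∈ E) →
      ∀ (a b : ℕ → ℝ) (n m : ℕ),
      ⟪∑ k ∈ Finset.range n, a k • (g (u k) - q), ∑ k ∈ Finset.range m, b k • (g (v k) - q)⟫_ℝ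
      = ⟪∑ k ∈ Finset.range n, a k • (u k - p), ∑ k ∈ Finset.range m, b k • (v k - p)⟫_ℝ := by
    intro u v hu hv a b n m
    simp only [sum_inner, inner_sum, real_inner_smul_left, real_inner_smul_right]
    refine Finset.sum_congr rfl fun i _ => Finset.sum_congr rfl fun j _ => ?_
    rw [hg _ (hu _) _ (hv _)]
  have norm_eq : ∀ (u v : ℕ → H), (∀ n, u n ∈ E) → (∀ n, v n ∈ E) →
      ∀ (a b : ℕ → ℝ) (n m : ℕ),
      ‖(∑ k ∈ Finset.range n, a k • (g (u k) - q)) - ∑ k ∈ Finset.range m, b k • (g (v k) - q)‖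
      = ‖(∑ k ∈ Finset.range n, a k • (u k - p)) - ∑ k ∈ Finset.range m, b k • (v k - p)‖ := by
    intro u v hu hv a b n m
    rw [norm_eq_sqrt_real_inner, norm_eq_sqrt_real_inner]
    congr 1
    simp only [inner_sub_left, inner_sub_right]
    rw [inner_eq u u hu hu a a, inner_eq u v hu hv a b, inner_eq v u hv hu b a,
      inner_eq v v hv hv b b]
  set A : ℕ → H := fun n => ∑ k ∈ Finset.range n, α k • (x k - p) with hA_def
  set B : ℕ → H := fun n => ∑ k ∈ Finset.range n, β k • (y k - p) with hB_def
  set F : ℕ → H := fun n => ∑ k ∈ Finset.range n, α k • (g (x k) - q) with hF_def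
  set G : ℕ → H := fun n => ∑ k ∈ Finset.range n, β k • (g (y k) - q) with hG_def
  have hA : CauchySeq A := hxs.cauchySeq
  have hF : CauchySeq F := by
    rw [Metric.cauchySeq_iff] at hA ⊢
    intro ε hε
    obtain ⟨N, hN⟩ := hA ε hε
    refine ⟨N, fun n hn m hm => ?_⟩
    have := hN n hn m hm
    rw [dist_eq_norm] at this ⊢
    rw [hF_def]
    simp only
    rw [norm_eq x x hx hx α α n m]
    exact this
  obtain ⟨t, ht⟩ := cauchySeq_tendsto_of_complete hF
  refine ⟨t, ht, ?_⟩
  have hdiff : Tendsto (fun n => G n - F n) atTop (nhds 0) := by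
    rw [tendsto_zero_iff_norm_tendsto_zero]
    have hBA : Tendsto (fun n => B n - A n) atTop (nhds (s - s)) := hys.sub hxs
    rw [sub_self] at hBA
    have hBA' : Tendsto (fun n => ‖B n - A n‖) atTop (nhds 0) := by
      simpa using hBA.norm
    refine hBA'.congr fun n => ?_
    rw [hG_def, hF_def, hB_def, hA_def]
    simp only
    rw [norm_eq y x hy hx β α n n]
  have : Tendsto (fun n => (G n - F n) + F n) atTop (nhds (0 + t)) := hdiff.add ht
  simpa using this
end

section
/- Let H be a real Hilbert space, E ⊆ H, p ∈ E, q ∈ H, and g : E → H with g(p) = q satisfying ⟨g(x) − q, g(y) − q⟩ = ⟨x − p, y − p⟩ for all x, y ∈ E. Define GS(E,p) = { p + v : v is the sum of a convergent series Σₙ αₙ (xₙ − p) with xₙ ∈ E, αₙ ∈ ℝ }, and define G : GS(E,p) → H by G(p + Σₙ αₙ (xₙ − p)) = q + Σₙ αₙ (g(xₙ) − q). Then ⟨G(u) − q, G(v) − q⟩ = ⟨u − p, v − p⟩ for all u, v ∈ GS(E,p); in particular G is an isometry: ‖G(u) − G(v)‖ = ‖u − v‖. -/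
open scoped InnerProductSpace
open Filter

/-- The first-order generalized linear span of `E` with respect to `p`:
all points `p + Σₙ αₙ (xₙ - p)` with `xₙ ∈ E` and the series convergent. -/
def GS {H : Type*} [NormedAddCommGroup H] [InnerProductSpace ℝ H]
    (E : Set H) (p : H) : Set H :=
  {u : H | ∃ (x : ℕ → H) (α : ℕ → ℝ), (∀ n, x n ∈ E) ∧
    Tendsto (fun n => ∑ k ∈ Finset.range n, α k • (x k - p)) atTop (nhds (u - p))}

/-- the extension `G` of `g` to the generalized linear span preserves
inner products of differences from the basepoints; in particular it is an isometry. -/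
theorem stmt3 {H : Type*} [NormedAddCommGroup H] [InnerProductSpace ℝ H] [CompleteSpace H]
    (E : Set H) (p q : H) (hp : p ∈ E) (g : H → H) (hgp : g p = q)
    (hg : ∀ x ∈ E, ∀ y ∈ E, ⟪g x - q, g y - q⟫_ℝ = ⟪x - p, y - p⟫_ℝ)
    (G : H → H)
    (hG : ∀ u ∈ GS E p, ∀ (x : ℕ → H) (α : ℕ → ℝ), (∀ n, x n ∈ E) →
      Tendsto (fun n => ∑ k ∈ Finset.range n, α k • (x k - p)) atTop (nhds (u - p)) →
      Tendsto (fun n => ∑ k ∈ Finset.range n, α k • (g (x k) - q)) atTop (nhds (G u - q))) :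
    ∀ u ∈ GS E p, ∀ v ∈ GS E p,
      ⟪G u - q, G v - q⟫_ℝ = ⟪u - p, v - p⟫_ℝ ∧ ‖G u - G v‖ = ‖u - v‖ := by
  have main : ∀ u ∈ GS E p, ∀ v ∈ GS E p, ⟪G u - q, G v - q⟫_ℝ = ⟪u - p, v - p⟫_ℝ := by
    rintro u hu v hv
    obtain ⟨x, α, hx, hxT⟩ := hu
    obtain ⟨y, β, hy, hyT⟩ := hv
    have h1 := hG u ⟨x, α, hx, hxT⟩ x α hx hxT
    have h2 := hG v ⟨y, β, hy, hyT⟩ y β hy hyT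
    have heq : ∀ n, ⟪∑ k ∈ Finset.range n, α k • (g (x k) - q),
        ∑ k ∈ Finset.range n, β k • (g (y k) - q)⟫_ℝ
        = ⟪∑ k ∈ Finset.range n, α k • (x k - p),
        ∑ k ∈ Finset.range n, β k • (y k - p)⟫_ℝ := by
      intro n
      rw [sum_inner, sum_inner]
      refine Finset.sum_congr rfl fun k _ => ?_
      rw [inner_sum, inner_sum]
      refine Finset.sum_congr rfl fun j _ => ?_
      rw [real_inner_smul_left, real_inner_smul_left, real_inner_smul_right,
        real_inner_smul_right, hg (x k) (hx k) (y j) (hy j)]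
    have hA : Tendsto (fun n => ⟪∑ k ∈ Finset.range n, α k • (g (x k) - q),
        ∑ k ∈ Finset.range n, β k • (g (y k) - q)⟫_ℝ) atTop (nhds ⟪G u - q, G v - q⟫_ℝ) :=
      h1.inner h2
    have hB : Tendsto (fun n => ⟪∑ k ∈ Finset.range n, α k • (x k - p),
        ∑ k ∈ Finset.range n, β k • (y k - p)⟫_ℝ) atTop (nhds ⟪u - p, v - p⟫_ℝ) :=
      hxT.inner hyT
    exact tendsto_nhds_unique (hA.congr fun n => (heq n)) hB
  intro u hu v hv
  refine ⟨main u hu v hv, ?_⟩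
  have e1 : G u - G v = (G u - q) - (G v - q) := by abel
  have e2 : u - v = (u - p) - (v - p) := by abel
  have hi : ⟪G u - G v, G u - G v⟫_ℝ = ⟪u - v, u - v⟫_ℝ := by
    have m1 := main u hu u hu
    have m2 := main u hu v hv
    have m3 := main v hv u hu
    have m4 := main v hv v hv
    rw [e1, e2]
    simp only [inner_sub_left, inner_sub_right] at m1 m2 m3 m4 ⊢
    linarith [m1, m2, m3, m4, real_inner_comm (G u) q, real_inner_comm (G v) q,
      real_inner_comm u p, real_inner_comm v p, real_inner_comm (G u) (G v),
      real_inner_comm u v]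
  have h2 : ‖G u - G v‖ ^ 2 = ‖u - v‖ ^ 2 := by
    rw [← real_inner_self_eq_norm_sq, ← real_inner_self_eq_norm_sq, hi]
  nlinarith [h2, norm_nonneg (G u - G v), norm_nonneg (u - v)]
end

section
/- Let H be a real Hilbert space, E ⊆ H bounded with at least two elements, and p, p′ ∈ E. Then GS(E,p) − p′ is a real linear subspace of H (i.e., the generalized linear span translated by any element p′ of E, not just the basepoint, is a subspace). -/
open scoped InnerProductSpace
open Filter

private lemma interleave_sum {M : Type*} [AddCommMonoid M] (f g : ℕ → M) :
    ∀ m, (∑ k ∈ Finset.range m, (if k % 2 = 0 then f (k/2) else g (k/2)))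
      = ∑ k ∈ Finset.range ((m+1)/2), f k + ∑ k ∈ Finset.range (m/2), g k := by
  intro m
  induction m with
  | zero => simp
  | succ m ih =>
    rw [Finset.sum_range_succ, ih]
    rcases Nat.even_or_odd m with ⟨t, ht⟩ | ⟨t, ht⟩
    · subst ht
      have h1 : (t + t) % 2 = 0 := by omega
      have h2 : (t + t) / 2 = t := by omega
      have h3 : (t + t + 1) / 2 = t := by omega
      have h4 : (t + t + 1 + 1) / 2 = t + 1 := by omega
      rw [if_pos h1, h2, h3, h4, Finset.sum_range_succ]
      abel
    · subst ht
      have h1 : ¬ ((2*t + 1) % 2 = 0) := by omega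
      have h2 : (2*t + 1) / 2 = t := by omega
      have h3 : (2*t + 1 + 1) / 2 = t + 1 := by omega
      have h4 : (2*t + 1 + 1 + 1) / 2 = t + 1 := by omega
      rw [if_neg h1, h2, h3, h4, Finset.sum_range_succ g t]
      abel

private lemma half_tendsto : Tendsto (fun m : ℕ => m / 2) atTop atTop := by
  apply tendsto_atTop_atTop_of_monotone
  · exact fun a b hab => Nat.div_le_div_right hab
  · intro b; exact ⟨2 * b, by omega⟩

private lemma half_tendsto' : Tendsto (fun m : ℕ => (m + 1) / 2) atTop atTop := by
  apply tendsto_atTop_atTop_of_monotone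
  · exact fun a b hab => Nat.div_le_div_right (by omega)
  · intro b; exact ⟨2 * b, by omega⟩

/-- `GS(E,p) - p'` is a real linear subspace of `H` for any `p' ∈ E`. -/
theorem stmt5 {H : Type*} [NormedAddCommGroup H] [InnerProductSpace ℝ H] [CompleteSpace H]
    (E : Set H) (hE : Bornology.IsBounded E)
    (hE2 : ∃ x ∈ E, ∃ y ∈ E, x ≠ y)
    (p : H) (hp : p ∈ E) (p' : H) (hp' : p' ∈ E) :
    ∃ V : Submodule ℝ H, (V : Set H) = (fun u => u - p') '' GS E p := by
  classical
  set S : Set H := {v : H | ∃ (x : ℕ → H) (α : ℕ → ℝ), (∀ n, x n ∈ E) ∧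
    Tendsto (fun n => ∑ k ∈ Finset.range n, α k • (x k - p)) atTop (nhds v)} with hSdef
  have hzero : (0 : H) ∈ S :=
    ⟨fun _ => p, fun _ => 0, fun _ => hp, by simpa using (tendsto_const_nhds : Tendsto (fun _ : ℕ => (0:H)) atTop (nhds 0))⟩
  have hsmul : ∀ (c : ℝ) (v : H), v ∈ S → c • v ∈ S := by
    rintro c v ⟨x, α, hx, hlim⟩
    refine ⟨x, fun k => c * α k, hx, ?_⟩
    have : (fun n => ∑ k ∈ Finset.range n, (c * α k) • (x k - p))
        = fun n => c • ∑ k ∈ Finset.range n, α k • (x k - p) := by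
      funext n
      rw [Finset.smul_sum]
      exact Finset.sum_congr rfl fun k _ => (smul_smul c (α k) _).symm
    rw [this]
    exact hlim.const_smul c
  have hadd : ∀ v w : H, v ∈ S → w ∈ S → v + w ∈ S := by
    rintro v w ⟨x, α, hx, hv⟩ ⟨x', α', hx', hw⟩
    refine ⟨fun n => if n % 2 = 0 then x (n/2) else x' (n/2),
      fun n => if n % 2 = 0 then α (n/2) else α' (n/2), ?_, ?_⟩
    · intro n; dsimp only; split <;> [exact hx _; exact hx' _]
    · have heq : (fun m => ∑ k ∈ Finset.range m,
          (if k % 2 = 0 then α (k/2) else α' (k/2)) •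
            ((if k % 2 = 0 then x (k/2) else x' (k/2)) - p))
          = fun m => (∑ k ∈ Finset.range ((m+1)/2), α k • (x k - p))
            + ∑ k ∈ Finset.range (m/2), α' k • (x' k - p) := by
        funext m
        rw [← interleave_sum (fun k => α k • (x k - p)) (fun k => α' k • (x' k - p)) m]
        refine Finset.sum_congr rfl fun k _ => ?_
        split <;> rfl
      rw [heq]
      exact (hv.comp half_tendsto').add (hw.comp half_tendsto)
  -- single-term elements
  have hsingle : ∀ q ∈ E, ∀ c : ℝ, c • (q - p) ∈ S := by
    intro q hq c
    refine ⟨fun _ => q, fun n => if n = 0 then c else 0, fun _ => hq, ?_⟩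
    have : ∀ m, 1 ≤ m → (∑ k ∈ Finset.range m, (if k = 0 then c else 0) • (q - p)) = c • (q - p) := by
      intro m hm
      rw [Finset.sum_eq_single 0]
      · simp
      · intro b _ hb; simp [hb]
      · intro h; exact absurd (Finset.mem_range.mpr (by omega)) h
    refine Tendsto.congr' ?_ (tendsto_const_nhds : Tendsto (fun _ : ℕ => c • (q - p)) atTop (nhds (c • (q - p))))
    filter_upwards [eventually_ge_atTop 1] with m hm
    exact (this m hm).symm
  have hd : p' - p ∈ S := by simpa using hsingle p' hp' 1
  have hd' : p - p' ∈ S := by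
    have := hsingle p' hp' (-1)
    simpa [neg_sub] using this
  refine ⟨{ carrier := S
            add_mem' := fun {a b} ha hb => hadd a b ha hb
            zero_mem' := hzero
            smul_mem' := fun c {v} hv => hsmul c v hv }, ?_⟩
  ext w
  simp only [Submodule.coe_set_mk, AddSubmonoid.coe_set_mk, Set.mem_image]
  constructor
  · intro hw
    obtain ⟨x, α, hx, hl⟩ := hadd _ _ hw hd
    refine ⟨w + p', ?_, by abel⟩
    simp only [GS, Set.mem_setOf_eq]
    exact ⟨x, α, hx, by convert hl using 2; abel⟩
  · rintro ⟨u, hu, rfl⟩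
    obtain ⟨x, α, hx, hl⟩ := hu
    have hup : u - p ∈ S := ⟨x, α, hx, hl⟩
    have : (u - p) + (p - p') ∈ S := hadd _ _ hup hd'
    convert this using 1
    · rfl
    · abel
end

section
/- Let H be a real Hilbert space, E ⊆ H bounded, p ∈ E, and r > 0 with E ⊆ B_r(p) (the open ball of radius r centered at p). Define GS²(E,p) = GS(GS(E,p) ∩ B_r(p), p). Then GS²(E,p) equals the closure of GS(E,p) in H. -/
open scoped InnerProductSpace
open Filter

section Aux

variable {H : Type*} [NormedAddCommGroup H] [InnerProductSpace ℝ H]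

/-- The shifted generalized span: `GS E p - p`. -/
def Wset (E : Set H) (p : H) : Set H :=
  {w : H | ∃ (x : ℕ → H) (α : ℕ → ℝ), (∀ n, x n ∈ E) ∧
    Tendsto (fun n => ∑ k ∈ Finset.range n, α k • (x k - p)) atTop (nhds w)}

lemma mem_GS_iff {E : Set H} {p u : H} : u ∈ GS E p ↔ u - p ∈ Wset E p := Iff.rfl

/-- `Wset` is a submodule. -/
def Wsub (E : Set H) (p : H) (hp : p ∈ E) : Submodule ℝ H where
  carrier := Wset E p
  zero_mem' := by
    refine ⟨fun _ => p, fun _ => 0, fun _ => hp, ?_⟩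
    simpa using (tendsto_const_nhds : Tendsto (fun _ : ℕ => (0 : H)) atTop (nhds 0))
  smul_mem' := by
    rintro c w ⟨x, α, hx, hT⟩
    refine ⟨x, fun n => c * α n, hx, ?_⟩
    simpa [mul_smul, ← Finset.smul_sum] using hT.const_smul c
  add_mem' := by
    rintro a b ⟨x, α, hx, ha⟩ ⟨y, β, hy, hb⟩
    refine ⟨fun n => if n % 2 = 0 then x (n / 2) else y (n / 2),
            fun n => if n % 2 = 0 then α (n / 2) else β (n / 2), fun n => ?_, ?_⟩
    · dsimp only; split
      · exact hx _
      · exact hy _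
    · have key : ∀ n, (∑ k ∈ Finset.range n,
          (if k % 2 = 0 then α (k / 2) else β (k / 2)) •
            ((if k % 2 = 0 then x (k / 2) else y (k / 2)) - p))
          = (∑ k ∈ Finset.range ((n + 1) / 2), α k • (x k - p))
            + (∑ k ∈ Finset.range (n / 2), β k • (y k - p)) := by
        intro n
        induction n with
        | zero => simp
        | succ n ih =>
          rw [Finset.sum_range_succ, ih]
          rcases Nat.even_or_odd n with ⟨m, hm⟩ | ⟨m, hm⟩
          · have h0 : n % 2 = 0 := by omega
            have h1 : n / 2 = m := by omega
            have h2 : (n + 1) / 2 = m := by omega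
            have h3 : (n + 1 + 1) / 2 = m + 1 := by omega
            rw [h0, h1, h2, h3, if_pos rfl, if_pos rfl, Finset.sum_range_succ]
            abel
          · have h0 : ¬ (n % 2 = 0) := by omega
            have h1 : n / 2 = m := by omega
            have h2 : (n + 1) / 2 = m + 1 := by omega
            have h3 : (n + 1 + 1) / 2 = m + 1 := by omega
            rw [if_neg h0, if_neg h0, h1, h2, h3, Finset.sum_range_succ,
              Finset.sum_range_succ]
            abel
      have hhalf : Tendsto (fun n : ℕ => n / 2) atTop atTop :=
        Filter.tendsto_atTop_atTop.2 fun c => ⟨2 * c, fun n hn => by omega⟩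
      have hhalf' : Tendsto (fun n : ℕ => (n + 1) / 2) atTop atTop :=
        Filter.tendsto_atTop_atTop.2 fun c => ⟨2 * c, fun n hn => by omega⟩
      simp only [key]
      exact (ha.comp hhalf').add (hb.comp hhalf)

lemma closure_GS (E : Set H) (p : H) :
    closure (GS E p) = {u : H | u - p ∈ closure (Wset E p)} := by
  have himg : GS E p = (Homeomorph.addRight p) '' (Wset E p) := by
    ext u
    constructor
    · intro hu; exact ⟨u - p, hu, by simp⟩
    · rintro ⟨w, hw, rfl⟩
      show (w + p) - p ∈ Wset E p
      simpa using hw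
  rw [himg, ← Homeomorph.image_closure]
  ext u
  constructor
  · rintro ⟨w, hw, rfl⟩
    show (w + p) - p ∈ closure (Wset E p)
    simpa using hw
  · intro hu; exact ⟨u - p, hu, by simp⟩

end Aux

/-- the second-order generalized linear span
`GS²(E,p) = GS(GS(E,p) ∩ B_r(p), p)` equals the closure of `GS(E,p)`. -/
theorem stmt6 {H : Type*} [NormedAddCommGroup H] [InnerProductSpace ℝ H] [CompleteSpace H]
    (E : Set H) (hE : Bornology.IsBounded E) (p : H) (hp : p ∈ E)
    (r : ℝ) (hr : 0 < r) (hEr : E ⊆ Metric.ball p r) :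
    GS (GS E p ∩ Metric.ball p r) p = closure (GS E p) := by
  have hcoe : ((Wsub E p hp : Submodule ℝ H) : Set H) = Wset E p := rfl
  ext u
  rw [closure_GS]
  constructor
  · rintro ⟨x, α, hxF, hT⟩
    have hmem : ∀ n, (∑ k ∈ Finset.range n, α k • (x k - p)) ∈ Wsub E p hp := by
      intro n
      exact Submodule.sum_mem _ fun k _ =>
        Submodule.smul_mem _ _ ((hxF k).1 : x k - p ∈ Wset E p)
    exact mem_closure_of_tendsto hT (Eventually.of_forall hmem)
  · intro hu
    obtain ⟨v, hv, hvlim⟩ := mem_closure_iff_seq_limit.mp hu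
    set w : ℕ → H := fun n => v n - (if n = 0 then 0 else v (n - 1)) with hw
    have hsum : ∀ n, (∑ k ∈ Finset.range (n + 1), w k) = v n := by
      intro n
      induction n with
      | zero => simp [hw]
      | succ n ih =>
        rw [Finset.sum_range_succ, ih, hw]
        simp
    have hwmem : ∀ n, w n ∈ Wsub E p hp := by
      intro n
      cases n with
      | zero => have h0 : v 0 ∈ Wsub E p hp := hv 0; simpa [hw] using h0
      | succ n =>
        have : w (n + 1) = v (n + 1) - v n := by simp [hw]
        rw [this]
        exact sub_mem (hv (n + 1)) (hv n)
    set c : ℕ → ℝ := fun n => r / (‖w n‖ + r) with hc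
    set α : ℕ → ℝ := fun n => (‖w n‖ + r) / r with hα
    set x : ℕ → H := fun n => p + c n • w n with hx
    have hden : ∀ n, 0 < ‖w n‖ + r := fun n => by positivity
    refine ⟨x, α, fun n => ⟨?_, ?_⟩, ?_⟩
    · rw [mem_GS_iff]
      have : x n - p = c n • w n := by simp [hx]
      rw [this]
      exact Submodule.smul_mem _ _ (hwmem n)
    · rw [Metric.mem_ball, dist_eq_norm]
      have h1 : x n - p = c n • w n := by simp [hx]
      rw [h1, norm_smul, Real.norm_eq_abs, abs_of_pos (by positivity : (0:ℝ) < c n)]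
      have := hden n
      rw [hc]
      rw [div_mul_eq_mul_div, div_lt_iff₀ this]
      nlinarith [norm_nonneg (w n)]
    · have hterm : ∀ k, α k • (x k - p) = w k := by
        intro k
        have h1 : x k - p = c k • w k := by simp [hx]
        rw [h1, smul_smul, hα, hc]
        have := hden k
        have : α k * c k = 1 := by
          rw [hα, hc]; field_simp
        rw [hα, hc] at this
        rw [this, one_smul]
      have hS : ∀ n, (∑ k ∈ Finset.range n, α k • (x k - p)) = ∑ k ∈ Finset.range n, w k := by
        intro n; exact Finset.sum_congr rfl fun k _ => hterm k
      simp only [hS]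
      have h1 : Tendsto (fun n => ∑ k ∈ Finset.range (n + 1), w k) atTop (nhds (u - p)) := by
        simpa [hsum] using hvlim
      exact (tendsto_add_atTop_iff_nat 1).mp h1
end

section
/- Let H be a real Hilbert space, E ⊆ H bounded, p ∈ E, and let s, t > 0 both satisfy E ⊆ B_s(p) and E ⊆ B_t(p). Then GS(GS(E,p) ∩ B_s(p), p) = GS(GS(E,p) ∩ B_t(p), p), i.e., the second-order generalized linear span does not depend on the choice of radius. -/
open scoped InnerProductSpace
open Filter

lemma GS_smul {H : Type*} [NormedAddCommGroup H] [InnerProductSpace ℝ H]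
    {E : Set H} {p x : H} (hx : x ∈ GS E p) (c : ℝ) : p + c • (x - p) ∈ GS E p := by
  obtain ⟨xs, α, hxs, hlim⟩ := hx
  refine ⟨xs, fun n => c * α n, hxs, ?_⟩
  have : Tendsto (fun n => c • ∑ k ∈ Finset.range n, α k • (xs k - p)) atTop
      (nhds (c • (x - p))) := hlim.const_smul c
  simpa [Finset.smul_sum, mul_smul, add_sub_cancel_left] using this

lemma GS_subset {H : Type*} [NormedAddCommGroup H] [InnerProductSpace ℝ H]
    {F₁ F₂ : Set H} {p : H}
    (h : ∀ x ∈ F₁, ∃ y ∈ F₂, ∃ c : ℝ, x - p = c • (y - p)) :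
    GS F₁ p ⊆ GS F₂ p := by
  rintro u ⟨xs, α, hxs, hlim⟩
  choose ys hys cs hcs using fun n => h (xs n) (hxs n)
  refine ⟨ys, fun n => α n * cs n, hys, ?_⟩
  have : (fun n => ∑ k ∈ Finset.range n, (α k * cs k) • (ys k - p)) =
      fun n => ∑ k ∈ Finset.range n, α k • (xs k - p) := by
    funext n
    refine Finset.sum_congr rfl fun k _ => ?_
    rw [hcs k, mul_smul]
  rw [this]; exact hlim

lemma GS_ball_subset {H : Type*} [NormedAddCommGroup H] [InnerProductSpace ℝ H]
    (E : Set H) (p : H) (s t : ℝ) (ht : 0 < t) :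
    GS (GS E p ∩ Metric.ball p s) p ⊆ GS (GS E p ∩ Metric.ball p t) p := by
  apply GS_subset
  rintro x ⟨hxGS, -⟩
  set c : ℝ := t / (2 * (‖x - p‖ + 1)) with hc
  have hxp : (0:ℝ) < ‖x - p‖ + 1 := by positivity
  have hcpos : 0 < c := by positivity
  refine ⟨p + c • (x - p), ⟨GS_smul hxGS c, ?_⟩, c⁻¹, ?_⟩
  · rw [Metric.mem_ball, dist_eq_norm]
    have h1 : ‖p + c • (x - p) - p‖ = c * ‖x - p‖ := by
      simp [norm_smul, abs_of_pos hcpos]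
    rw [h1, hc]
    rw [div_mul_eq_mul_div, div_lt_iff₀ (by positivity)]
    have : ‖x - p‖ < ‖x - p‖ + 1 := by linarith
    nlinarith [norm_nonneg (x - p)]
  · rw [add_sub_cancel_left, smul_smul, inv_mul_cancel₀ hcpos.ne', one_smul]

/-- the second-order generalized linear span does not depend on the
choice of radius. -/
theorem stmt7 {H : Type*} [NormedAddCommGroup H] [InnerProductSpace ℝ H] [CompleteSpace H]
    (E : Set H) (hE : Bornology.IsBounded E) (p : H) (hp : p ∈ E)
    (s t : ℝ) (hs : 0 < s) (ht : 0 < t)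
    (hEs : E ⊆ Metric.ball p s) (hEt : E ⊆ Metric.ball p t) :
    GS (GS E p ∩ Metric.ball p s) p = GS (GS E p ∩ Metric.ball p t) p :=
  le_antisymm (GS_ball_subset E p s t ht) (GS_ball_subset E p t s hs)
end

section
/- Let H be a real Hilbert space, E ⊆ H bounded, p ∈ E, and r > 0 with E ⊆ B_r(p). Define GS¹(E,p) = GS(E,p) and GSⁿ⁺¹(E,p) = GS(GSⁿ(E,p) ∩ B_r(p), p). Then GSⁿ(E,p) ⊆ GSⁿ⁺¹(E,p) for all n ≥ 1, and GSⁿ(E,p) = GS²(E,p) for all n ≥ 2; in particular GSⁿ(E,p) − p is a closed linear subspace of H (hence a real Hilbert space) for all n ≥ 2. -/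
open scoped InnerProductSpace
open Filter

/-- The `n`-th order generalized linear span: `GS⁰ = E`, `GS¹(E,p) = GS(E,p)` and
`GSⁿ⁺¹(E,p) = GS(GSⁿ(E,p) ∩ B_r(p), p)`. -/
def GSn {H : Type*} [NormedAddCommGroup H] [InnerProductSpace ℝ H]
    (E : Set H) (p : H) (r : ℝ) : ℕ → Set H
  | 0 => E
  | 1 => GS E p
  | (n + 2) => GS (GSn E p r (n + 1) ∩ Metric.ball p r) p

section Aux

variable {H : Type*} [NormedAddCommGroup H] [InnerProductSpace ℝ H]

/-- Elements of `GS F p` lie in `p +` any closed submodule containing `F - p`. -/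
lemma GS_sub_mem_closedSubmodule (F : Set H) (p : H) (V : Submodule ℝ H)
    (hVc : IsClosed (V : Set H)) (hF : ∀ y ∈ F, y - p ∈ V) :
    ∀ u ∈ GS F p, u - p ∈ V := by
  rintro u ⟨x, α, hx, hlim⟩
  refine hVc.mem_of_tendsto hlim (Eventually.of_forall fun n => ?_)
  exact V.sum_mem fun k _ => V.smul_mem _ (hF _ (hx k))

/-- A finite linear combination of elements of `F - p` is in `GS F p - p`. -/
lemma finite_sum_mem_GS (F : Set H) (p : H) (hpF : p ∈ F)
    (m : ℕ) (β : ℕ → ℝ) (x : ℕ → H) (hx : ∀ i, x i ∈ F) :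
    p + ∑ i ∈ Finset.range m, β i • (x i - p) ∈ GS F p := by
  refine ⟨fun i => if i < m then x i else p, fun i => if i < m then β i else 0, ?_, ?_⟩
  · intro i; by_cases h : i < m <;> simp [h, hx, hpF]
  · have hval : (p + ∑ i ∈ Finset.range m, β i • (x i - p)) - p
      = ∑ i ∈ Finset.range m, β i • (x i - p) := add_sub_cancel_left p _
    rw [hval]
    apply tendsto_atTop_of_eventually_const (i₀ := m)
    intro n hn
    rw [← Finset.sum_subset (Finset.range_subset_range.mpr hn)]
    · refine Finset.sum_congr rfl fun k hk => ?_
      have : k < m := Finset.mem_range.mp hk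
      simp [this]
    · intro k _ hk
      have : ¬ k < m := fun h => hk (Finset.mem_range.mpr h)
      simp [this]

/-- The span of `F - p` is contained in `GS F p - p`. -/
lemma span_subset_GS (F : Set H) (p : H) (hpF : p ∈ F) :
    ∀ w ∈ Submodule.span ℝ ((fun u => u - p) '' F), p + w ∈ GS F p := by
  intro w hw
  have hD : ∀ w ∈ Submodule.span ℝ ((fun u => u - p) '' F),
      ∃ (m : ℕ) (β : ℕ → ℝ) (x : ℕ → H), (∀ i, x i ∈ F) ∧
        w = ∑ i ∈ Finset.range m, β i • (x i - p) := by
    intro w hw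
    induction hw using Submodule.span_induction with
    | mem y hy =>
      obtain ⟨z, hz, rfl⟩ := hy
      exact ⟨1, fun _ => 1, fun _ => z, fun _ => hz, by simp⟩
    | zero => exact ⟨0, fun _ => 0, fun _ => p, fun _ => hpF, by simp⟩
    | add a b _ _ iha ihb =>
      obtain ⟨m1, β1, x1, hx1, rfl⟩ := iha
      obtain ⟨m2, β2, x2, hx2, rfl⟩ := ihb
      refine ⟨m1 + m2, fun i => if i < m1 then β1 i else β2 (i - m1),
        fun i => if i < m1 then x1 i else x2 (i - m1), ?_, ?_⟩
      · intro i; by_cases h : i < m1 <;> simp [h, hx1, hx2]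
      · rw [Finset.sum_range_add]
        congr 1
        · exact Finset.sum_congr rfl fun k hk => by simp [Finset.mem_range.mp hk]
        · refine Finset.sum_congr rfl fun k _ => ?_
          have h1 : ¬ m1 + k < m1 := by omega
          simp [h1]
    | smul a w _ ih =>
      obtain ⟨m, β, x, hx, rfl⟩ := ih
      refine ⟨m, fun i => a * β i, x, hx, ?_⟩
      rw [Finset.smul_sum]
      exact Finset.sum_congr rfl fun k _ => smul_smul a (β k) _
  obtain ⟨m, β, x, hx, rfl⟩ := hD w hw
  exact finite_sum_mem_GS F p hpF m β x hx

/-- If `p + span ⊆ G`, then `p + closure span ⊆ GS (G ∩ ball p r) p`. -/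
lemma closure_span_subset_GS (E : Set H) (p : H) (r : ℝ) (hr : 0 < r) (G : Set H)
    (hspan : ∀ w ∈ Submodule.span ℝ ((fun u => u - p) '' E), p + w ∈ G) :
    ∀ w ∈ closure ((Submodule.span ℝ ((fun u => u - p) '' E) : Submodule ℝ H) : Set H),
      p + w ∈ GS (G ∩ Metric.ball p r) p := by
  intro w hw
  set s : Set H := ((Submodule.span ℝ ((fun u => u - p) '' E) : Submodule ℝ H) : Set H) with hs
  have hv : ∀ k : ℕ, ∃ b ∈ s, dist w b < r / 2 ^ (k + 2) :=
    fun k => Metric.mem_closure_iff.mp hw _ (by positivity)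
  choose v hv1 hv2 using hv
  -- scaling of the first term
  set t : ℝ := r / (2 * (‖v 0‖ + 1)) with ht
  have ht0 : 0 < t := by positivity
  have htv : ‖t • v 0‖ < r := by
    rw [norm_smul, Real.norm_eq_abs, abs_of_pos ht0]
    have h1 : t * ‖v 0‖ < t * (‖v 0‖ + 1) := by
      have := ht0; nlinarith [norm_nonneg (v 0)]
    have h2 : t * (‖v 0‖ + 1) = r / 2 := by
      rw [ht, div_mul_eq_mul_div, div_eq_div_iff (by positivity) (by positivity)]; ring
    linarith
  refine ⟨fun k => if k = 0 then p + t • v 0 else p + (v k - v (k - 1)),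
    fun k => if k = 0 then t⁻¹ else 1, ?_, ?_⟩
  · intro k
    by_cases hk : k = 0
    · subst hk
      simp only [↓reduceIte]
      constructor
      · exact hspan _ ((Submodule.span ℝ _).smul_mem t (hv1 0))
      · rw [Metric.mem_ball, dist_eq_norm, add_sub_cancel_left]; exact htv
    · simp only [if_neg hk]
      constructor
      · refine hspan _ ?_
        exact (Submodule.span ℝ _).sub_mem (hv1 k) (hv1 (k - 1))
      · rw [Metric.mem_ball, dist_eq_norm, add_sub_cancel_left]
        obtain ⟨j, rfl⟩ : ∃ j, k = j + 1 := ⟨k - 1, by omega⟩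
        have h1 : dist w (v (j + 1)) < r / 2 ^ (j + 3) := hv2 (j + 1)
        have h2 : dist w (v j) < r / 2 ^ (j + 2) := hv2 j
        have hd : dist (v (j + 1)) (v j) ≤ dist w (v (j + 1)) + dist w (v j) := by
          rw [dist_comm w (v (j+1))]
          exact dist_triangle _ _ _
        have hb1 : r / 2 ^ (j + 3) ≤ r / 8 := by
          apply div_le_div_of_nonneg_left hr.le (by norm_num)
          calc (8 : ℝ) = 2 ^ 3 := by norm_num
          _ ≤ 2 ^ (j + 3) := by
            apply pow_le_pow_right₀ (by norm_num); omega
        have hb2 : r / 2 ^ (j + 2) ≤ r / 4 := by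
          apply div_le_div_of_nonneg_left hr.le (by norm_num)
          calc (4 : ℝ) = 2 ^ 2 := by norm_num
          _ ≤ 2 ^ (j + 2) := by
            apply pow_le_pow_right₀ (by norm_num); omega
        have : ‖v (j + 1) - v j‖ = dist (v (j + 1)) (v j) := (dist_eq_norm _ _).symm
        simp only [Nat.add_sub_cancel]
        rw [this]
        linarith
  · -- the partial sums telescope to `v (n - 1)`
    have key : ∀ n : ℕ, (∑ k ∈ Finset.range (n + 1),
        (if k = 0 then t⁻¹ else 1) • ((if k = 0 then p + t • v 0 else p + (v k - v (k - 1))) - p))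
        = v n := by
      intro n
      induction n with
      | zero =>
        simp [smul_smul, inv_mul_cancel₀ (ne_of_gt ht0)]
      | succ n ih =>
        rw [Finset.sum_range_succ, ih]
        have hne : n + 1 ≠ 0 := Nat.succ_ne_zero n
        simp only [if_neg hne, one_smul, add_sub_cancel_left, Nat.add_sub_cancel]
        abel
    have hvw : Tendsto v atTop (nhds w) := by
      rw [tendsto_iff_dist_tendsto_zero]
      apply squeeze_zero (fun n => dist_nonneg) (fun n => le_of_lt (by rw [dist_comm]; exact hv2 n))
      have : Tendsto (fun k : ℕ => (r / 4) * (1 / 2) ^ k) atTop (nhds 0) := by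
        rw [show (0 : ℝ) = (r / 4) * 0 by ring]
        exact (tendsto_pow_atTop_nhds_zero_of_lt_one (by norm_num) (by norm_num)).const_mul _
      refine this.congr fun k => ?_
      rw [div_pow, one_pow, pow_add, div_mul_div_comm, mul_one]
      norm_num [mul_comm]
    have hcomp : Tendsto (fun n : ℕ => v (n - 1)) atTop (nhds w) :=
      hvw.comp (tendsto_sub_atTop_nat 1)
    have : (p + w) - p = w := add_sub_cancel_left p w
    rw [this]
    refine hcomp.congr' ?_
    filter_upwards [eventually_ge_atTop 1] with n hn
    obtain ⟨j, rfl⟩ : ∃ j, n = j + 1 := ⟨n - 1, by omega⟩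
    simp only [Nat.add_sub_cancel]
    exact (key j).symm

end Aux

/-- the tower of generalized linear spans is increasing and stabilizes at
the second stage; `GSⁿ(E,p) - p` is a closed linear subspace for `n ≥ 2`. -/
theorem stmt8 {H : Type*} [NormedAddCommGroup H] [InnerProductSpace ℝ H] [CompleteSpace H]
    (E : Set H) (hE : Bornology.IsBounded E) (p : H) (hp : p ∈ E)
    (r : ℝ) (hr : 0 < r) (hEr : E ⊆ Metric.ball p r) :
    (∀ n, 1 ≤ n → GSn E p r n ⊆ GSn E p r (n + 1)) ∧
    (∀ n, 2 ≤ n → GSn E p r n = GSn E p r 2) ∧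
    (∀ n, 2 ≤ n → ∃ V : Submodule ℝ H, IsClosed (V : Set H) ∧
      (V : Set H) = (fun u => u - p) '' GSn E p r n) := by
  set S : Submodule ℝ H := Submodule.span ℝ ((fun u => u - p) '' E) with hS
  set V : Submodule ℝ H := S.topologicalClosure with hV
  have hVc : IsClosed (V : Set H) := S.isClosed_topologicalClosure
  have hVcoe : (V : Set H) = closure (S : Set H) := rfl
  -- claim 2: p ∈ GSⁿ⁺¹ and p + span ⊆ GSⁿ⁺¹
  have claim2 : ∀ n : ℕ, p ∈ GSn E p r (n + 1) ∧ ∀ w ∈ S, p + w ∈ GSn E p r (n + 1) := by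
    intro n
    induction n with
    | zero =>
      constructor
      · have := finite_sum_mem_GS E p hp 0 (fun _ => 0) (fun _ => p) (fun _ => hp)
        simpa [GSn] using this
      · intro w hw
        exact span_subset_GS E p hp w hw
    | succ n ih =>
      have hpF : p ∈ GSn E p r (n + 1) ∩ Metric.ball p r :=
        ⟨ih.1, Metric.mem_ball_self hr⟩
      constructor
      · show p ∈ GS (GSn E p r (n + 1) ∩ Metric.ball p r) p
        have := finite_sum_mem_GS _ p hpF 0 (fun _ => 0) (fun _ => p) (fun _ => hpF)
        simpa using this
      · intro w hw
        show p + w ∈ GS (GSn E p r (n + 1) ∩ Metric.ball p r) p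
        set t : ℝ := r / (2 * (‖w‖ + 1)) with ht
        have ht0 : 0 < t := by positivity
        have htv : ‖t • w‖ < r := by
          rw [norm_smul, Real.norm_eq_abs, abs_of_pos ht0]
          have h1 : t * ‖w‖ < t * (‖w‖ + 1) := by nlinarith [norm_nonneg w]
          have h2 : t * (‖w‖ + 1) = r / 2 := by
            rw [ht, div_mul_eq_mul_div, div_eq_div_iff (by positivity) (by positivity)]; ring
          linarith
        have hy : p + t • w ∈ GSn E p r (n + 1) ∩ Metric.ball p r := by
          constructor
          · exact ih.2 _ (S.smul_mem t hw)
          · rw [Metric.mem_ball, dist_eq_norm, add_sub_cancel_left]; exact htv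
        have := finite_sum_mem_GS _ p hpF 1 (fun _ => t⁻¹) (fun _ => p + t • w) (fun _ => hy)
        simp only [Finset.range_one, Finset.sum_singleton, add_sub_cancel_left,
          smul_smul, inv_mul_cancel₀ (ne_of_gt ht0), one_smul] at this
        exact this
  -- claim 1: GSⁿ⁺¹ - p ⊆ V
  have claim1 : ∀ n : ℕ, ∀ u ∈ GSn E p r (n + 1), u - p ∈ V := by
    intro n
    induction n with
    | zero =>
      refine GS_sub_mem_closedSubmodule E p V hVc fun y hy => ?_
      exact subset_closure (Submodule.subset_span ⟨y, hy, rfl⟩)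
    | succ n ih =>
      show ∀ u ∈ GS (GSn E p r (n + 1) ∩ Metric.ball p r) p, u - p ∈ V
      exact GS_sub_mem_closedSubmodule _ p V hVc fun y hy => ih y hy.1
  -- claim 3: p + V ⊆ GSⁿ⁺²
  have claim3 : ∀ n : ℕ, ∀ w ∈ V, p + w ∈ GSn E p r (n + 2) := by
    intro n w hw
    show p + w ∈ GS (GSn E p r (n + 1) ∩ Metric.ball p r) p
    exact closure_span_subset_GS E p r hr _ (claim2 n).2 w hw
  -- characterization of GSⁿ for n ≥ 2
  have hchar : ∀ n : ℕ, ∀ u : H, u ∈ GSn E p r (n + 2) ↔ u - p ∈ V := by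
    intro n u
    constructor
    · exact claim1 (n + 1) u
    · intro hu
      have := claim3 n _ hu
      simpa using this
  refine ⟨?_, ?_, ?_⟩
  · intro n hn u hu
    obtain ⟨m, rfl⟩ : ∃ m, n = m + 1 := ⟨n - 1, by omega⟩
    exact (hchar m u).mpr (claim1 m u hu)
  · intro n hn
    obtain ⟨m, rfl⟩ : ∃ m, n = m + 2 := ⟨n - 2, by omega⟩
    ext u
    rw [hchar m u, show (2 : ℕ) = 0 + 2 from rfl, hchar 0 u]
  · intro n hn
    obtain ⟨m, rfl⟩ : ∃ m, n = m + 2 := ⟨n - 2, by omega⟩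
    refine ⟨V, hVc, ?_⟩
    ext w
    constructor
    · intro hw
      exact ⟨p + w, (hchar m _).mpr (by rwa [add_sub_cancel_left]), add_sub_cancel_left p w⟩
    · rintro ⟨u, hu, rfl⟩
      exact (hchar m u).mp hu
end

section
/- Let H = M_a be the Hilbert space of sequences x = (x₁, x₂, …) of reals with Σᵢ aᵢ² xᵢ² < ∞, with inner product ⟨x,y⟩ = Σᵢ aᵢ² xᵢ yᵢ, where aᵢ > 0 and Σᵢ aᵢ² < ∞. Let eᵢ denote the i-th standard unit sequence. Let E ⊆ M_a be bounded, p ∈ E, and suppose i is an index of E, i.e., there exist x ∈ E and α ≠ 0 with x + α eᵢ ∈ E. Then p + α eᵢ ∈ GS(E,p) for every α ∈ ℝ. -/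
open scoped InnerProductSpace
open Filter

/-- The index set `Λ(E)` of a set `E` with respect to the vectors `e i`. -/
def Lam {H : Type*} [NormedAddCommGroup H] [InnerProductSpace ℝ H]
    (e : ℕ → H) (E : Set H) : Set ℕ :=
  {i | ∃ x ∈ E, ∃ α : ℝ, α ≠ 0 ∧ x + α • e i ∈ E}

/-- in the Hilbert space `M_a` (a real Hilbert space with vectors `e i`
of norm `a i` such that `{eᵢ/aᵢ}` is a complete orthonormal sequence), if `i` is an
index of a bounded set `E` and `p ∈ E`, then `p + α • eᵢ ∈ GS(E,p)` for all `α`. -/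
theorem stmt9 {H : Type*} [NormedAddCommGroup H] [InnerProductSpace ℝ H] [CompleteSpace H]
    (a : ℕ → ℝ) (ha : ∀ i, 0 < a i) (hsum : Summable fun i => (a i) ^ 2)
    (e : ℕ → H) (he : Orthonormal ℝ (fun i => (a i)⁻¹ • e i))
    (hcomp : (Submodule.span ℝ (Set.range e)).topologicalClosure = ⊤)
    (E : Set H) (hE : Bornology.IsBounded E) (p : H) (hp : p ∈ E)
    (i : ℕ) (hi : i ∈ Lam e E) :
    ∀ α : ℝ, p + α • e i ∈ GS E p := by
  obtain ⟨x₀, hx₀, β, hβ, hx₁⟩ := hi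
  intro α
  refine ⟨fun n => if n = 0 then x₀ + β • e i else if n = 1 then x₀ else p,
    fun n => if n = 0 then α / β else if n = 1 then -(α / β) else 0, ?_, ?_⟩
  · intro n
    rcases n with _ | _ | n <;> simp [hx₁, hx₀, hp]
  · have key : ∀ n, 2 ≤ n →
        (∑ k ∈ Finset.range n,
          (if k = 0 then α / β else if k = 1 then -(α / β) else 0) •
            ((if k = 0 then x₀ + β • e i else if k = 1 then x₀ else p) - p))
          = α • e i := by
      intro n hn
      rw [← Finset.sum_subset (Finset.range_subset_range.mpr hn)
        (by intro k _ hk; rcases k with _ | _ | k <;> simp_all)]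
      rw [Finset.sum_range_succ, Finset.sum_range_one]
      norm_num
      rw [← sub_eq_add_neg, ← smul_sub,
        show x₀ + β • e i - p - (x₀ - p) = β • e i by abel,
        smul_smul, div_mul_cancel₀ _ hβ]
    have : p + α • e i - p = α • e i := by abel
    rw [this]
    exact Tendsto.congr' (EventuallyEq.symm
      ((eventually_ge_atTop 2).mono fun n hn => key n hn)) tendsto_const_nhds
end

section
/- Let M_a be the Hilbert space of real sequences with inner product ⟨x,y⟩ = Σᵢ aᵢ² xᵢ yᵢ, where aᵢ > 0 and Σ aᵢ² < ∞. Let J = Πᵢ Jᵢ ⊆ M_a where each Jᵢ is a closed subinterval of [0,1] (possibly degenerate to a point), all but finitely many coordinates being [0,1] or all but an arbitrary set being singletons, and let p ∈ J. Let Λ(J) be the set of indices i for which Jᵢ is not a singleton. Then GS(J,p) = { p + Σᵢ∈Λ(J) αᵢ eᵢ ∈ M_a : αᵢ ∈ ℝ }, i.e., the generalized linear span of J with respect to p is exactly the set of points of M_a that differ from p only in coordinates belonging to Λ(J). -/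
open scoped InnerProductSpace
open Filter

/-- in `M_a` (a real Hilbert space with vectors `e i` of norm `a i`,
`{eᵢ/aᵢ}` a complete orthonormal sequence; the `i`-th coordinate of `x` is
`⟪x, eᵢ⟫/aᵢ²`), let `J = Πᵢ Jᵢ` be a product of closed subintervals `Jᵢ = [lo i, hi i]`
of `[0,1]`, nondegenerate exactly for `i ∈ ΛJ`, and `p ∈ J`.  Then `GS(J,p)` is exactly
the set of points of `M_a` that differ from `p` only in coordinates in `ΛJ`, i.e. all
`p + Σᵢ∈ΛJ αᵢ eᵢ` (convergent in `M_a`). -/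
theorem stmt11 {H : Type*} [NormedAddCommGroup H] [InnerProductSpace ℝ H] [CompleteSpace H]
    (a : ℕ → ℝ) (ha : ∀ i, 0 < a i) (hsum : Summable fun i => (a i) ^ 2)
    (e : ℕ → H) (he : Orthonormal ℝ (fun i => (a i)⁻¹ • e i))
    (hcomp : (Submodule.span ℝ (Set.range e)).topologicalClosure = ⊤)
    (J : Set H) (lo hi : ℕ → ℝ) (ΛJ : Set ℕ)
    (hbounds : ∀ i, 0 ≤ lo i ∧ lo i ≤ hi i ∧ hi i ≤ 1)
    (hJ : ∀ x : H, x ∈ J ↔ ∀ i,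
      lo i ≤ ⟪x, e i⟫_ℝ / (a i) ^ 2 ∧ ⟪x, e i⟫_ℝ / (a i) ^ 2 ≤ hi i)
    (hnd : ∀ i ∈ ΛJ, lo i < hi i) (hdeg : ∀ i ∉ ΛJ, lo i = hi i)
    (p : H) (hp : p ∈ J) :
    GS J p = {u : H | ∃ α : ℕ → ℝ, (∀ i ∉ ΛJ, α i = 0) ∧
      HasSum (fun i => α i • e i) (u - p)} := by

  classical
  have hne : ∀ i, a i ≠ 0 := fun i => (ha i).ne'
  have hee : ∀ i j, ⟪e i, e j⟫_ℝ = if i = j then (a i)^2 else 0 := by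
    intro i j
    have h := orthonormal_iff_ite.mp he i j
    rw [real_inner_smul_left, real_inner_smul_right] at h
    rcases eq_or_ne i j with rfl | hij
    · simp only [eq_self_iff_true, if_true] at h ⊢
      have := hne i
      field_simp at h
      nlinarith [h]
    · simp only [if_neg hij] at h ⊢
      have h1 := hne i; have h2 := hne j
      field_simp at h
      simpa using h
  have hspan : Submodule.span ℝ (Set.range fun i => (a i)⁻¹ • e i)
      = Submodule.span ℝ (Set.range e) := by
    apply le_antisymm
    · rw [Submodule.span_le]; rintro _ ⟨i, rfl⟩
      exact Submodule.smul_mem _ _ (Submodule.subset_span ⟨i, rfl⟩)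
    · rw [Submodule.span_le]; rintro _ ⟨i, rfl⟩
      have : e i = a i • ((a i)⁻¹ • e i) := by
        rw [smul_smul, mul_inv_cancel₀ (hne i), one_smul]
      rw [this]
      exact Submodule.smul_mem _ _ (Submodule.subset_span ⟨i, rfl⟩)
  have hsp : ⊤ ≤ (Submodule.span ℝ
      (Set.range fun i => (a i)⁻¹ • e i)).topologicalClosure := by
    rw [hspan, hcomp]
  let b : HilbertBasis ℕ ℝ H := HilbertBasis.mk he hsp
  have hbasis : ∀ v : H, HasSum (fun i => (⟪v, e i⟫_ℝ / (a i)^2) • e i) v := by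
    intro v
    have h := b.hasSum_repr v
    have hb : ∀ i, (b i : H) = (a i)⁻¹ • e i := by
      intro i
      show (HilbertBasis.mk he hsp) i = _
      rw [HilbertBasis.coe_mk]
    convert h using 2 with i
    rw [b.repr_apply_apply, hb i, real_inner_smul_left, smul_smul,
      real_inner_comm]
    congr 1
    field_simp
  ext u
  simp only [GS, Set.mem_setOf_eq]
  constructor
  · rintro ⟨x, β, hx, hlim⟩
    refine ⟨fun i => ⟪u - p, e i⟫_ℝ / (a i)^2, ?_, hbasis (u - p)⟩
    intro i hi0
    have hco : ∀ k, ⟪x k - p, e i⟫_ℝ = 0 := by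
      intro k
      have h1 := ((hJ (x k)).mp (hx k)) i
      have h2 := ((hJ p).mp hp) i
      have hd := hdeg i hi0
      have ha2 : (a i)^2 ≠ 0 := pow_ne_zero _ (hne i)
      have e1 : ⟪x k, e i⟫_ℝ = lo i * (a i)^2 := by
        have : ⟪x k, e i⟫_ℝ / (a i)^2 = lo i :=
          le_antisymm (hd ▸ h1.2) h1.1
        rw [div_eq_iff ha2] at this; linarith [this]
      have e2 : ⟪p, e i⟫_ℝ = lo i * (a i)^2 := by
        have : ⟪p, e i⟫_ℝ / (a i)^2 = lo i :=
          le_antisymm (hd ▸ h2.2) h2.1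
        rw [div_eq_iff ha2] at this; linarith [this]
      rw [inner_sub_left, e1, e2, sub_self]
    have hzero : ∀ n, ⟪∑ k ∈ Finset.range n, β k • (x k - p), e i⟫_ℝ = 0 := by
      intro n
      rw [sum_inner]
      apply Finset.sum_eq_zero
      intro k _
      rw [real_inner_smul_left, hco k, mul_zero]
    have htend : Tendsto (fun n => ⟪∑ k ∈ Finset.range n, β k • (x k - p), e i⟫_ℝ)
        atTop (nhds ⟪u - p, e i⟫_ℝ) := hlim.inner tendsto_const_nhds
    have h0 : Tendsto (fun n : ℕ => (0:ℝ)) atTop (nhds ⟪u - p, e i⟫_ℝ) := by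
      simpa only [hzero] using htend
    have hz : ⟪u - p, e i⟫_ℝ = 0 := tendsto_nhds_unique h0 tendsto_const_nhds
    show ⟪u - p, e i⟫_ℝ / (a i)^2 = 0
    rw [hz, zero_div]
  · rintro ⟨α, hα0, hαsum⟩
    have coordp := (hJ p).mp hp
    have coord : ∀ (t : ℝ) (k j : ℕ), ⟪p + t • e k, e j⟫_ℝ / (a j)^2 =
        ⟪p, e j⟫_ℝ / (a j)^2 + if k = j then t else 0 := by
      intro t k j
      rw [inner_add_left, real_inner_smul_left, hee]
      rcases eq_or_ne k j with rfl | h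
      · simp only [eq_self_iff_true, if_true]
        have := pow_ne_zero 2 (hne k)
        rw [add_div, mul_div_cancel_right₀ _ this]
      · simp [h]
    have key : ∀ k, ∃ x ∈ J, ∃ γ : ℝ, γ • (x - p) = α k • e k := by
      intro k
      by_cases hk : k ∈ ΛJ
      · set c := ⟪p, e k⟫_ℝ / (a k)^2 with hc
        have hlohi := hnd k hk
        by_cases hlt : c < hi k
        · have ht : hi k - c ≠ 0 := sub_ne_zero.mpr (ne_of_gt hlt)
          refine ⟨p + (hi k - c) • e k, ?_, α k / (hi k - c), ?_⟩
          · rw [hJ]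
            intro j
            rw [coord]
            rcases eq_or_ne k j with rfl | h
            · rw [if_pos rfl, ← hc]
              constructor
              · linarith [(coordp k).1]
              · linarith
            · simp only [if_neg h, add_zero]
              exact coordp j
          · rw [add_sub_cancel_left, smul_smul, div_mul_cancel₀ _ ht]
        · have hce : c = hi k := le_antisymm (coordp k).2 (not_lt.mp hlt)
          have ht : lo k - c ≠ 0 := by rw [hce]; exact sub_ne_zero.mpr (ne_of_lt hlohi)
          refine ⟨p + (lo k - c) • e k, ?_, α k / (lo k - c), ?_⟩
          · rw [hJ]
            intro j
            rw [coord]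
            rcases eq_or_ne k j with rfl | h
            · rw [if_pos rfl, ← hc]
              constructor
              · linarith
              · linarith
            · simp only [if_neg h, add_zero]
              exact coordp j
          · rw [add_sub_cancel_left, smul_smul, div_mul_cancel₀ _ ht]
      · exact ⟨p, hp, 0, by rw [hα0 k hk]; simp⟩
    choose x hxJ γ hγ using key
    refine ⟨x, γ, hxJ, ?_⟩
    have heq : (fun n => ∑ k ∈ Finset.range n, γ k • (x k - p))
        = fun n => ∑ k ∈ Finset.range n, α k • e k := by
      funext n; exact Finset.sum_congr rfl fun k _ => hγ k
    rw [heq]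
    exact hαsum.tendsto_sum_nat
end

section
/- Let M_a be the Hilbert space of real sequences with ⟨x,y⟩ = Σᵢ aᵢ² xᵢ yᵢ (aᵢ > 0, Σ aᵢ² < ∞). Let E ⊆ M_a be bounded with at least two elements and p ∈ E. Then Λ(GS²(E,p)) = ℕ if and only if GS²(E,p) = M_a. -/
open scoped InnerProductSpace
open Filter

/-- The second-order generalized linear span `GS²(E,p) = GS(GS(E,p) ∩ B_r(p), p)`. -/
def GS2 {H : Type*} [NormedAddCommGroup H] [InnerProductSpace ℝ H]
    (E : Set H) (p : H) (r : ℝ) : Set H :=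
  GS (GS E p ∩ Metric.ball p r) p

section aux
variable {H : Type*} [NormedAddCommGroup H] [InnerProductSpace ℝ H]

/-- `p` plus any element of the span of `E - p` belongs to `GS E p`. -/
lemma mem_GS_of_mem_span {E : Set H} {p : H} (hp : p ∈ E) {z : H}
    (hz : z ∈ Submodule.span ℝ ((fun x => x - p) '' E)) :
    p + z ∈ GS E p := by
  obtain ⟨n, f, g, hg⟩ := Submodule.mem_span_set'.mp hz
  choose xg hxgE hxg using fun i : Fin n => (g i).2
  refine ⟨fun k => if h : k < n then xg ⟨k, h⟩ else p,
          fun k => if h : k < n then f ⟨k, h⟩ else 0,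
          fun k => by dsimp only; split <;> [exact hxgE _; exact hp], ?_⟩
  have key : ∀ N, n ≤ N →
      (∑ k ∈ Finset.range N, (if h : k < n then f ⟨k, h⟩ else 0) •
        ((if h : k < n then xg ⟨k, h⟩ else p) - p)) = z := by
    intro N hN
    rw [← Finset.sum_subset (Finset.range_subset_range.2 hN)]
    · rw [← Fin.sum_univ_eq_sum_range
        (fun k => (if h : k < n then f ⟨k, h⟩ else 0) •
          ((if h : k < n then xg ⟨k, h⟩ else p) - p)) n]
      rw [← hg]
      refine Finset.sum_congr rfl fun i _ => ?_
      rw [dif_pos i.2, dif_pos i.2, Fin.eta, ← hxg i]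
    · intro k _ hk
      rw [Finset.mem_range, not_lt] at hk
      rw [dif_neg (not_lt.2 hk), zero_smul]
  have hzz : p + z - p = z := add_sub_cancel_left p z
  rw [hzz]
  refine Tendsto.congr' ?_ tendsto_const_nhds
  filter_upwards [eventually_ge_atTop n] with N hN
  exact (key N hN).symm

/-- Every element of `GS E p` lies in `p` plus the closure of the span of `E - p`. -/
lemma GS_subset_closure {E : Set H} {p u : H} (hu : u ∈ GS E p) :
    u - p ∈ closure (Submodule.span ℝ ((fun x => x - p) '' E) : Set H) := by
  obtain ⟨x, α, hx, hten⟩ := hu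
  refine mem_closure_of_tendsto hten (Eventually.of_forall fun N => ?_)
  exact Submodule.sum_mem _ fun k _ =>
    Submodule.smul_mem _ _ (Submodule.subset_span ⟨x k, hx k, rfl⟩)

end aux

/-- in `M_a`, for bounded `E` with at least two elements and `p ∈ E`,
`Λ(GS²(E,p)) = ℕ` if and only if `GS²(E,p) = M_a`. -/
theorem stmt14 {H : Type*} [NormedAddCommGroup H] [InnerProductSpace ℝ H] [CompleteSpace H]
    (a : ℕ → ℝ) (ha : ∀ i, 0 < a i) (hsum : Summable fun i => (a i) ^ 2)
    (e : ℕ → H) (he : Orthonormal ℝ (fun i => (a i)⁻¹ • e i))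
    (hcomp : (Submodule.span ℝ (Set.range e)).topologicalClosure = ⊤)
    (E : Set H) (hE : Bornology.IsBounded E) (hE2 : ∃ x ∈ E, ∃ y ∈ E, x ≠ y)
    (p : H) (hp : p ∈ E)
    (r : ℝ) (hr : 0 < r) (hEr : E ⊆ Metric.ball p r) :
    Lam e (GS2 E p r) = Set.univ ↔ GS2 E p r = Set.univ := by
  set V : Submodule ℝ H := (Submodule.span ℝ ((fun x => x - p) '' E)).topologicalClosure with hV
  constructor
  · intro hLam
    -- every element of GS2 lies in p + V
    have hGS2V : ∀ u ∈ GS2 E p r, u - p ∈ V := by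
      intro u hu
      have h1 := GS_subset_closure (hu : u ∈ GS (GS E p ∩ Metric.ball p r) p)
      have hle : Submodule.span ℝ ((fun x => x - p) '' (GS E p ∩ Metric.ball p r)) ≤ V := by
        rw [Submodule.span_le]
        rintro _ ⟨q, ⟨hq, _⟩, rfl⟩
        exact GS_subset_closure hq
      have hVclosed : IsClosed (V : Set H) := by
        rw [hV]; exact Submodule.isClosed_topologicalClosure _
      exact closure_minimal hle hVclosed h1
    -- hence each e i lies in V
    have heV : ∀ i, e i ∈ V := by
      intro i
      have hi : i ∈ Lam e (GS2 E p r) := hLam ▸ Set.mem_univ i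
      obtain ⟨x, hx, α, hα, hxa⟩ := hi
      have h1 := hGS2V x hx
      have h2 := hGS2V _ hxa
      have h3 : α • e i ∈ V := by
        have h4 := V.sub_mem h2 h1
        have h5 : (x + α • e i - p) - (x - p) = α • e i := by abel
        rwa [h5] at h4
      have h6 := V.smul_mem α⁻¹ h3
      rwa [smul_smul, inv_mul_cancel₀ hα, one_smul] at h6
    -- so V = ⊤
    have hVtop : V = ⊤ := by
      rw [← top_le_iff, ← hcomp]
      have hVclosed : IsClosed (V : Set H) := by
        rw [hV]; exact Submodule.isClosed_topologicalClosure _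
      exact Submodule.topologicalClosure_minimal _
        (Submodule.span_le.2 (Set.range_subset_iff.2 heV)) hVclosed
    -- now show GS2 = univ
    rw [Set.eq_univ_iff_forall]
    intro u
    have hu : u - p ∈ closure (Submodule.span ℝ ((fun x => x - p) '' E) : Set H) := by
      have : u - p ∈ (V : Set H) := by rw [hVtop]; trivial
      rwa [hV, Submodule.topologicalClosure_coe] at this
    obtain ⟨c, hc, hclim⟩ := mem_closure_iff_seq_limit.mp hu
    set s : ℕ → H := fun n => Nat.casesOn n 0 c with hs
    have hsm : ∀ n, s n ∈ Submodule.span ℝ ((fun x => x - p) '' E) := by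
      intro n; cases n with
      | zero => exact zero_mem _
      | succ m => exact hc m
    have hst : Tendsto s atTop (nhds (u - p)) := by
      rw [← tendsto_add_atTop_iff_nat 1]
      exact hclim
    set t : ℕ → H := fun n => s (n + 1) - s n with ht
    set δ : ℕ → ℝ := fun n => r / (2 * (‖t n‖ + 1)) with hδ
    have hδpos : ∀ n, 0 < δ n := by
      intro n
      have : (0:ℝ) < ‖t n‖ + 1 := by positivity
      exact div_pos hr (by linarith)
    have htm : ∀ n, t n ∈ Submodule.span ℝ ((fun x => x - p) '' E) :=
      fun n => sub_mem (hsm (n + 1)) (hsm n)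
    refine ⟨fun n => p + δ n • t n, fun n => (δ n)⁻¹, fun n => ⟨?_, ?_⟩, ?_⟩
    · exact mem_GS_of_mem_span hp (Submodule.smul_mem _ _ (htm n))
    · -- ball membership
      rw [Metric.mem_ball, dist_eq_norm, add_sub_cancel_left, norm_smul,
        Real.norm_eq_abs, abs_of_pos (hδpos n)]
      have h1 : (0:ℝ) < ‖t n‖ + 1 := by positivity
      rw [hδ]
      rw [div_mul_eq_mul_div, div_lt_iff₀ (by linarith : (0:ℝ) < 2 * (‖t n‖ + 1))]
      nlinarith [norm_nonneg (t n)]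
    · have hsum : ∀ N, (∑ k ∈ Finset.range N, (δ k)⁻¹ • ((p + δ k • t k) - p)) = s N := by
        intro N
        have : ∀ k, (δ k)⁻¹ • ((p + δ k • t k) - p) = s (k + 1) - s k := by
          intro k
          rw [add_sub_cancel_left, smul_smul, inv_mul_cancel₀ (hδpos k).ne', one_smul]
        simp only [this]
        rw [Finset.sum_range_sub s N]
        simp [hs]
      refine Tendsto.congr (fun N => (hsum N).symm) ?_
      exact hst
  · intro h
    rw [Set.eq_univ_iff_forall]
    intro i
    exact ⟨p, by rw [h]; trivial, 1, one_ne_zero, by rw [h]; trivial⟩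
end

section
/- Let H be a real Hilbert space and E₁, E₂ ⊆ H bounded sets isometric via a surjective isometry f : E₁ → E₂ with f(p) = q. Let F : GS(E₁,p) → H be the canonical isometric extension of f (defined by F(p + Σₙ αₙ(xₙ − p)) = q + Σₙ αₙ(f(xₙ) − q)). Then F(GS(E₁,p)) = GS(E₂,q), i.e., the image under F of the first-order generalized linear span of E₁ with respect to p equals the first-order generalized linear span of E₂ with respect to q. -/
open scoped InnerProductSpace
open Filter

lemma inner_preserved {H : Type*} [NormedAddCommGroup H] [InnerProductSpace ℝ H]
    (E₁ : Set H) (f : H → H)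
    (hf : ∀ x ∈ E₁, ∀ y ∈ E₁, ‖f x - f y‖ = ‖x - y‖)
    (p q : H) (hp : p ∈ E₁) (hq : q = f p)
    {x y : H} (hx : x ∈ E₁) (hy : y ∈ E₁) :
    ⟪x - p, y - p⟫_ℝ = ⟪f x - q, f y - q⟫_ℝ := by
  have h1 : ‖f x - q‖ = ‖x - p‖ := by rw [hq]; exact hf x hx p hp
  have h2 : ‖f y - q‖ = ‖y - p‖ := by rw [hq]; exact hf y hy p hp
  have h3 : ‖(f x - q) - (f y - q)‖ = ‖(x - p) - (y - p)‖ := by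
    simp only [sub_sub_sub_cancel_right]; exact hf x hx y hy
  have e1 := norm_sub_sq_real (x - p) (y - p)
  have e2 := norm_sub_sq_real (f x - q) (f y - q)
  rw [h1, h2, h3] at e2
  linarith

/-- the canonical isometric extension `F` of a surjective isometry
`f : E₁ → E₂` maps `GS(E₁,p)` onto `GS(E₂,q)`. -/
theorem stmt17 {H : Type*} [NormedAddCommGroup H] [InnerProductSpace ℝ H] [CompleteSpace H]
    (E₁ E₂ : Set H) (hE₁ : Bornology.IsBounded E₁) (hE₂ : Bornology.IsBounded E₂)
    (f : H → H) (hf : ∀ x ∈ E₁, ∀ y ∈ E₁, ‖f x - f y‖ = ‖x - y‖)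
    (hsurj : f '' E₁ = E₂)
    (p q : H) (hp : p ∈ E₁) (hq : q = f p)
    (F : H → H)
    (hF : ∀ u ∈ GS E₁ p, ∀ (x : ℕ → H) (α : ℕ → ℝ), (∀ n, x n ∈ E₁) →
      Tendsto (fun n => ∑ k ∈ Finset.range n, α k • (x k - p)) atTop (nhds (u - p)) →
      Tendsto (fun n => ∑ k ∈ Finset.range n, α k • (f (x k) - q)) atTop (nhds (F u - q))) :
    F '' GS E₁ p = GS E₂ q := by
  have hsum : ∀ (x : ℕ → H) (α : ℕ → ℝ), (∀ n, x n ∈ E₁) → ∀ s : Finset ℕ,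
      ‖∑ k ∈ s, α k • (x k - p)‖ = ‖∑ k ∈ s, α k • (f (x k) - q)‖ := by
    intro x α hx s
    have hsq : ‖∑ k ∈ s, α k • (x k - p)‖ ^ 2 = ‖∑ k ∈ s, α k • (f (x k) - q)‖ ^ 2 := by
      rw [← real_inner_self_eq_norm_sq, ← real_inner_self_eq_norm_sq, sum_inner, sum_inner]
      refine Finset.sum_congr rfl fun j _ => ?_
      rw [inner_sum, inner_sum]
      refine Finset.sum_congr rfl fun k _ => ?_
      rw [real_inner_smul_left, real_inner_smul_left, real_inner_smul_right,
        real_inner_smul_right, inner_preserved E₁ f hf p q hp hq (hx j) (hx k)]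
    nlinarith [norm_nonneg (∑ k ∈ s, α k • (x k - p)),
      norm_nonneg (∑ k ∈ s, α k • (f (x k) - q))]
  apply Set.eq_of_subset_of_subset
  · rintro v ⟨u, ⟨x, α, hx, htend⟩, rfl⟩
    refine ⟨fun n => f (x n), α, fun n => ?_, ?_⟩
    · rw [← hsurj]; exact ⟨x n, hx n, rfl⟩
    · exact hF u ⟨x, α, hx, htend⟩ x α hx htend
  · rintro v ⟨y, α, hy, htend⟩
    have hchoose : ∀ n, ∃ z ∈ E₁, f z = y n := by
      intro n; have := hy n; rw [← hsurj] at this; exact this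
    choose x hx hfx using hchoose
    set g : ℕ → H := fun n => ∑ k ∈ Finset.range n, α k • (f (x k) - q) with hg
    set h : ℕ → H := fun n => ∑ k ∈ Finset.range n, α k • (x k - p) with hh
    have hgtend : Tendsto g atTop (nhds (v - q)) := by
      have : g = fun n => ∑ k ∈ Finset.range n, α k • (y k - q) := by
        funext n; simp only [hg, hfx]
      rw [this]; exact htend
    have hgC : CauchySeq g := hgtend.cauchySeq
    have key : ∀ m n : ℕ, m ≤ n → ‖h n - h m‖ = ‖g n - g m‖ := by
      intro m n hmn
      rw [show h n - h m = ∑ k ∈ Finset.Ico m n, α k • (x k - p) from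
        (Finset.sum_Ico_eq_sub _ hmn).symm,
        show g n - g m = ∑ k ∈ Finset.Ico m n, α k • (f (x k) - q) from
        (Finset.sum_Ico_eq_sub _ hmn).symm]
      exact hsum x α hx _
    have hdist : ∀ n m : ℕ, dist (h n) (h m) = dist (g n) (g m) := by
      intro n m
      rcases le_total m n with hmn | hnm
      · rw [dist_eq_norm, dist_eq_norm, key m n hmn]
      · rw [dist_eq_norm, dist_eq_norm, norm_sub_rev (h n), norm_sub_rev (g n), key n m hnm]
    have hhC : CauchySeq h := by
      rw [Metric.cauchySeq_iff]
      intro ε hε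
      obtain ⟨N, hN⟩ := Metric.cauchySeq_iff.mp hgC ε hε
      exact ⟨N, fun a ha b hb => by rw [hdist]; exact hN a ha b hb⟩
    obtain ⟨w, hw⟩ := cauchySeq_tendsto_of_complete hhC
    have hu : (w + p) ∈ GS E₁ p := ⟨x, α, hx, by simpa using hw⟩
    have hFg : Tendsto g atTop (nhds (F (w + p) - q)) :=
      hF (w + p) hu x α hx (by simpa using hw)
    have : F (w + p) - q = v - q := tendsto_nhds_unique hFg hgtend
    exact ⟨w + p, hu, by linear_combination (norm := abel) this⟩
end
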